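/- In the contact-functional setting, assuming additionally that j_τ(x,·) satisfies j_τ⁰(x, ξ₁; ξ₂ − ξ₁) + j_τ⁰(x, ξ₂; ξ₁ − ξ₂) ≤ α_τ ‖ξ₁ − ξ₂‖² for all ξ₁, ξ₂ ∈ ℝ^d and a.e. x (with α_τ ≥ 0), the functional J(w,v) = ∫_{Γ_C} j(x, w(x), v(x)) dμ on X = L²(μ; ℝ^d) satisfies J₂⁰(w₁, v₁; v₂ − v₁) + J₂⁰(w₂, v₂; v₁ − v₂) ≤ ḡ_τ α_τ ‖v₁ − v₂‖_X² + (L_{g_ν} + L_{g_τ} c_τ) ‖w₁ − w₂‖_X ‖v₁ − v₂‖_X for all w₁, w₂, v₁, v₂ ∈ X, i.e. J satisfies H(J)(c) with m_{J1} = ḡ_τ α_τ and m_{J2} = L_{g_ν} + L_{g_τ} c_τ. -/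

import Mathlib

open Filter MeasureTheory

/-- Clarke generalized directional derivative. -/
noncomputable def clarkeDeriv {Y : Type*} [NormedAddCommGroup Y] [NormedSpace ℝ Y]
    (φ : Y → ℝ) (y z : Y) : ℝ :=
  Filter.limsup (fun p : Y × ℝ => (φ (p.1 + p.2 • z) - φ p.1) / p.2)
    ((nhds y) ×ˢ (nhdsWithin 0 (Set.Ioi 0)))

/-- Clarke subdifferential. -/
def clarkeSubdiff {Y : Type*} [NormedAddCommGroup Y] [NormedSpace ℝ Y]
    (φ : Y → ℝ) (y : Y) : Set (Y →L[ℝ] ℝ) :=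
  {ξ | ∀ z, ξ z ≤ clarkeDeriv φ y z}

/-- The contact integrand `j(x, η, ξ) = g_ν(x, η_ν) ξ_ν + g_τ(x, η_ν) j_τ(x, ξ_τ)`,
where `η_ν = η·ν(x)` and `η_τ = η − η_ν ν(x)`. -/
noncomputable def jfun {Ω : Type*} {d : ℕ}
    (ν : Ω → EuclideanSpace ℝ (Fin d)) (gν gτ : Ω → ℝ → ℝ)
    (jτ : Ω → EuclideanSpace ℝ (Fin d) → ℝ)
    (x : Ω) (η ξ : EuclideanSpace ℝ (Fin d)) : ℝ :=
  gν x (inner ℝ η (ν x)) * (inner ℝ ξ (ν x) : ℝ) +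
    gτ x (inner ℝ η (ν x)) * jτ x (ξ - (inner ℝ ξ (ν x) : ℝ) • ν x)

/-- The contact functional `J(w, v) = ∫_{Γ_C} j(x, w(x), v(x)) dμ` on `X = L²(μ; ℝ^d)`. -/
noncomputable def Jfun {Ω : Type*} [MeasurableSpace Ω] {d : ℕ} (μ : Measure Ω)
    (ν : Ω → EuclideanSpace ℝ (Fin d)) (gν gτ : Ω → ℝ → ℝ)
    (jτ : Ω → EuclideanSpace ℝ (Fin d) → ℝ)
    (w v : Lp (EuclideanSpace ℝ (Fin d)) 2 μ) : ℝ :=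
  ∫ x, jfun ν gν gτ jτ x (w x) (v x) ∂μ

/-!
The Clarke derivative of an integral functional `u ↦ ∫ F x (u x)` on `Lᵖ` is bounded by the
integral of the pointwise Clarke derivatives. Difference quotients approaching the limsup are taken
along a sequence whose base points, after passing to a subsequence, converge a.e.; dominated
convergence applied to the positive parts of the pointwise quotients (bounded through the Lipschitz
constant) then gives a reverse Fatou inequality. The two derivatives of the claim are handled along
a common subsequence, since only their sum is bounded pointwise.

Pointwise, `j(x, η, ·) = gν(η_ν) ⟪·, ν⟫ + gτ(η_ν) jτ((·)_τ)`, whose Clarke derivative in the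
direction `ζ` is at most `gν(η_ν) ζ_ν + gτ(η_ν) jτ⁰(ξ_τ; ζ_τ)`. In the sum of the two derivatives
write `gτ(η₁) d₁ + gτ(η₂) d₂ = gτ(η₁) (d₁ + d₂) + (gτ(η₂) - gτ(η₁)) d₂`: relaxed monotonicity of
`jτ` bounds `d₁ + d₂`, and the Lipschitz continuity of `gν, gτ` together with
`|d₂| ≤ cτ ‖ξ₁ - ξ₂‖` bounds the rest. Integrating and applying Cauchy–Schwarz in `L²` concludes.
-/

open scoped Topology NNReal ENNReal RealInnerProductSpace

section RealBounds

variable {ι : Type*} {l : Filter ι} {u : ι → ℝ} {C : ℝ}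

theorem isBoundedUnder_le_of_eventually_abs_le (h : ∀ᶠ i in l, |u i| ≤ C) :
    IsBoundedUnder (· ≤ ·) l u :=
  isBoundedUnder_of_eventually_le (h.mono fun _ hi => (abs_le.1 hi).2)

theorem isCoboundedUnder_le_of_eventually_abs_le [l.NeBot] (h : ∀ᶠ i in l, |u i| ≤ C) :
    IsCoboundedUnder (· ≤ ·) l u :=
  isCoboundedUnder_le_of_eventually_le l (h.mono fun _ hi => (abs_le.1 hi).1)

theorem abs_limsup_le_of_eventually_abs_le [l.NeBot] (h : ∀ᶠ i in l, |u i| ≤ C) :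
    |limsup u l| ≤ C :=
  abs_le.2 ⟨le_limsup_of_frequently_le (h.mono fun _ hi => (abs_le.1 hi).1).frequently
      (isBoundedUnder_le_of_eventually_abs_le h),
    limsup_le_of_le (isCoboundedUnder_le_of_eventually_abs_le h)
      (h.mono fun _ hi => (abs_le.1 hi).2)⟩

end RealBounds

theorem lipschitzWith_of_abs_sub_le {X : Type*} [SeminormedAddCommGroup X] {f : X → ℝ} {c : ℝ}
    (h : ∀ a b, |f a - f b| ≤ c * ‖a - b‖) : LipschitzWith c.toNNReal f :=
  LipschitzWith.of_dist_le' fun a b => by simpa [Real.dist_eq, dist_eq_norm] using h a b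

theorem eventually_snd_pos {Y : Type*} [TopologicalSpace Y] (y : Y) :
    ∀ᶠ p : Y × ℝ in 𝓝 y ×ˢ 𝓝[>] 0, 0 < p.2 :=
  tendsto_snd.eventually self_mem_nhdsWithin

section Clarke

variable {Y : Type*} [NormedAddCommGroup Y] [NormedSpace ℝ Y]

noncomputable def diffQuot (f : Y → ℝ) (z : Y) (p : Y × ℝ) : ℝ :=
  (f (p.1 + p.2 • z) - f p.1) / p.2

theorem clarkeDeriv_eq_limsup (f : Y → ℝ) (y z : Y) :
    clarkeDeriv f y z = limsup (diffQuot f z) (𝓝 y ×ˢ 𝓝[>] 0) := rfl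

theorem abs_diffQuot_le {f : Y → ℝ} {K : ℝ≥0} (hf : LipschitzWith K f) (z : Y) {p : Y × ℝ}
    (hp : 0 < p.2) : |diffQuot f z p| ≤ K * ‖z‖ := by
  rw [diffQuot, abs_div, abs_of_pos hp, div_le_iff₀ hp]
  calc |f (p.1 + p.2 • z) - f p.1| ≤ K * ‖p.1 + p.2 • z - p.1‖ := by
        simpa [dist_eq_norm, Real.dist_eq] using hf.dist_le_mul (p.1 + p.2 • z) p.1
    _ = K * ‖z‖ * p.2 := by rw [add_sub_cancel_left, norm_smul, Real.norm_of_nonneg hp.le]; ring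

theorem eventually_abs_diffQuot_le {f : Y → ℝ} {K : ℝ≥0} (hf : LipschitzWith K f) (y z : Y) :
    ∀ᶠ p in 𝓝 y ×ˢ 𝓝[>] 0, |diffQuot f z p| ≤ K * ‖z‖ :=
  (eventually_snd_pos y).mono fun _ hp => abs_diffQuot_le hf z hp

theorem abs_clarkeDeriv_le {f : Y → ℝ} {K : ℝ≥0} (hf : LipschitzWith K f) (y z : Y) :
    |clarkeDeriv f y z| ≤ K * ‖z‖ :=
  abs_limsup_le_of_eventually_abs_le (eventually_abs_diffQuot_le hf y z)

variable {f : Y → ℝ} {y z : Y} {C ε : ℝ}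

theorem eventually_diffQuot_lt_clarkeDeriv_add
    (hf : ∀ᶠ p in 𝓝 y ×ˢ 𝓝[>] 0, |diffQuot f z p| ≤ C) (hε : 0 < ε) :
    ∀ᶠ p in 𝓝 y ×ˢ 𝓝[>] 0, diffQuot f z p < clarkeDeriv f y z + ε :=
  eventually_lt_of_limsup_lt (lt_add_of_pos_right _ hε)
    (isBoundedUnder_le_of_eventually_abs_le hf)

theorem exists_seq_clarkeDeriv_sub_lt_diffQuot
    (hf : ∀ᶠ p in 𝓝 y ×ˢ 𝓝[>] 0, |diffQuot f z p| ≤ C) (hε : 0 < ε) :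
    ∃ s : ℕ → Y × ℝ, Tendsto s atTop (𝓝 y ×ˢ 𝓝[>] 0) ∧
      ∀ n, 0 < (s n).2 ∧ clarkeDeriv f y z - ε < diffQuot f z (s n) := by
  have hfreq : ∃ᶠ p in 𝓝 y ×ˢ 𝓝[>] 0, 0 < p.2 ∧ clarkeDeriv f y z - ε < diffQuot f z p :=
    ((frequently_lt_of_lt_limsup (isCoboundedUnder_le_of_eventually_abs_le hf)
      (sub_lt_self _ hε)).and_eventually (eventually_snd_pos y)).mono fun _ h => ⟨h.2, h.1⟩
  exact exists_seq_forall_of_frequently hfreq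

theorem clarkeDeriv_clm_add_mul_comp_le {Y' : Type*} [NormedAddCommGroup Y'] [NormedSpace ℝ Y']
    (ℓ : Y →L[ℝ] ℝ) (P : Y →L[ℝ] Y') {φ : Y' → ℝ} {K : ℝ≥0} (hφ : LipschitzWith K φ)
    {b : ℝ} (hb : 0 ≤ b) (y z : Y) :
    clarkeDeriv (fun u => ℓ u + b * φ (P u)) y z ≤ ℓ z + b * clarkeDeriv φ (P y) (P z) := by
  set Q : Y × ℝ → Y' × ℝ := fun p => (P p.1, p.2)
  have hQ : Tendsto Q (𝓝 y ×ˢ 𝓝[>] 0) (𝓝 (P y) ×ˢ 𝓝[>] 0) :=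
    ((P.continuous.tendsto y).comp tendsto_fst).prodMk tendsto_snd
  have hbd := hQ.eventually (eventually_abs_diffQuot_le hφ (P y) (P z))
  have hquot : diffQuot (fun u => ℓ u + b * φ (P u)) z =ᶠ[𝓝 y ×ˢ 𝓝[>] 0]
      fun p => ℓ z + b * diffQuot φ (P z) (Q p) :=
    (eventually_snd_pos y).mono fun p hp => by
      simp only [diffQuot, Q, map_add, map_smul, smul_eq_mul]
      field_simp
      ring
  rw [clarkeDeriv_eq_limsup, limsup_congr hquot, clarkeDeriv_eq_limsup]
  calc limsup (fun p => ℓ z + b * diffQuot φ (P z) (Q p)) (𝓝 y ×ˢ 𝓝[>] 0)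
      = ℓ z + b * limsup (fun p => diffQuot φ (P z) (Q p)) (𝓝 y ×ˢ 𝓝[>] 0) :=
        (Monotone.map_limsup_of_continuousAt (f := fun t => ℓ z + b * t)
          (fun _ _ h => by dsimp only; gcongr) _ (by fun_prop)
          (isBoundedUnder_le_of_eventually_abs_le hbd)
          (isCoboundedUnder_le_of_eventually_abs_le hbd)).symm
    _ ≤ ℓ z + b * limsup (diffQuot φ (P z)) (𝓝 (P y) ×ˢ 𝓝[>] 0) := by
        gcongr
        exact limsup_le_limsup_of_le hQ (isCoboundedUnder_le_of_eventually_abs_le hbd)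
          (isBoundedUnder_le_of_eventually_abs_le (eventually_abs_diffQuot_le hφ (P y) (P z)))

end Clarke

section ReverseFatou

variable {Ω : Type*} [MeasurableSpace Ω] {μ : Measure Ω}

theorem eventually_integral_lt_add {f : ℕ → Ω → ℝ} {g bound : Ω → ℝ}
    (hf : ∀ n, Integrable (f n) μ) (hg : Integrable g μ) (hbound : Integrable bound μ)
    (hfb : ∀ n, ∀ᵐ x ∂μ, |f n x| ≤ bound x)
    (hlim : ∀ᵐ x ∂μ, ∀ ε > 0, ∀ᶠ n in atTop, f n x < g x + ε) {ε : ℝ} (hε : 0 < ε) :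
    ∀ᶠ n in atTop, ∫ x, f n x ∂μ < ∫ x, g x ∂μ + ε := by
  set r : ℕ → Ω → ℝ := fun n x => max (f n x - g x) 0
  have hr_int : ∀ n, Integrable (r n) μ := fun n => ((hf n).sub hg).pos_part
  have hr : Tendsto (fun n => ∫ x, r n x ∂μ) atTop (𝓝 0) := by
    refine integral_zero Ω ℝ ▸ tendsto_integral_of_dominated_convergence
      (fun x => bound x + |g x|) (fun n => (hr_int n).1) (hbound.add hg.abs) (fun n => ?_) ?_
    · filter_upwards [hfb n] with x hx
      rw [Real.norm_of_nonneg (le_max_right _ _)]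
      refine max_le ?_ (by linarith [abs_nonneg (f n x), abs_nonneg (g x)])
      linarith [abs_le.1 hx, neg_abs_le (g x)]
    · filter_upwards [hlim] with x hx
      exact tendsto_order.2
        ⟨fun a ha => Eventually.of_forall fun n => ha.trans_le (le_max_right _ _),
          fun a ha => (hx a ha).mono fun n hn => max_lt (by linarith) ha⟩
  filter_upwards [hr.eventually (gt_mem_nhds hε)] with n hn
  calc ∫ x, f n x ∂μ = ∫ x, g x ∂μ + ∫ x, (f n x - g x) ∂μ := by
        rw [integral_sub (hf n) hg]; ring
    _ ≤ ∫ x, g x ∂μ + ∫ x, r n x ∂μ :=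
        add_le_add_right (integral_mono ((hf n).sub hg) (hr_int n) fun x => le_max_left _ _) _
    _ < ∫ x, g x ∂μ + ε := by linarith

end ReverseFatou

section IntegralFunctional

variable {Ω E : Type*} [MeasurableSpace Ω] {μ : Measure Ω} [NormedAddCommGroup E] {p : ℝ≥0∞}

theorem MeasureTheory.Lp.exists_strictMono_ae_tendsto₂ [Fact (1 ≤ p)] {f g : ℕ → Lp E p μ}
    {a b : Lp E p μ} (hf : Tendsto f atTop (𝓝 a)) (hg : Tendsto g atTop (𝓝 b)) :
    ∃ φ : ℕ → ℕ, StrictMono φ ∧ ∀ᵐ x ∂μ, Tendsto (fun n => f (φ n) x) atTop (𝓝 (a x)) ∧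
      Tendsto (fun n => g (φ n) x) atTop (𝓝 (b x)) := by
  obtain ⟨φ₁, hφ₁, hf₁⟩ := (tendstoInMeasure_of_tendsto_Lp hf).exists_seq_tendsto_ae
  obtain ⟨φ₂, hφ₂, hg₂⟩ :=
    (tendstoInMeasure_of_tendsto_Lp (hg.comp hφ₁.tendsto_atTop)).exists_seq_tendsto_ae
  exact ⟨φ₁ ∘ φ₂, hφ₁.comp hφ₂,
    (hf₁.and hg₂).mono fun x hx => ⟨hx.1.comp hφ₂.tendsto_atTop, hx.2⟩⟩

variable [NormedSpace ℝ E]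

theorem MeasureTheory.Lp.coeFn_add_smul (u z : Lp E p μ) (t : ℝ) :
    ⇑(u + t • z) =ᵐ[μ] fun x => u x + t • z x := by
  filter_upwards [Lp.coeFn_add u (t • z), Lp.coeFn_smul t z] with x h₁ h₂
  rw [h₁, Pi.add_apply, h₂, Pi.smul_apply]

variable {F : Ω → E → ℝ}

theorem integrable_diffQuot (hF : ∀ u : Lp E p μ, Integrable (fun x => F x (u x)) μ)
    (u z : Lp E p μ) (t : ℝ) : Integrable (fun x => diffQuot (F x) (z x) (u x, t)) μ :=
  (((hF (u + t • z)).congr ((Lp.coeFn_add_smul u z t).mono fun x hx => congrArg (F x) hx)).sub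
    (hF u)).div_const t

variable [Fact (1 ≤ p)]

theorem diffQuot_integral (hF : ∀ u : Lp E p μ, Integrable (fun x => F x (u x)) μ)
    (z : Lp E p μ) (q : Lp E p μ × ℝ) :
    diffQuot (fun u : Lp E p μ => ∫ x, F x (u x) ∂μ) z q =
      ∫ x, diffQuot (F x) (z x) (q.1 x, q.2) ∂μ := by
  have hshift : ∀ᵐ x ∂μ, F x ((q.1 + q.2 • z) x) = F x (q.1 x + q.2 • z x) :=
    (Lp.coeFn_add_smul q.1 z q.2).mono fun x hx => congrArg (F x) hx
  simp only [diffQuot]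
  rw [integral_congr_ae hshift, ← integral_sub ((hF _).congr hshift) (hF q.1), integral_div]

variable [IsFiniteMeasure μ]

theorem abs_diffQuot_integral_le {K : ℝ≥0} (hF : ∀ u : Lp E p μ, Integrable (fun x => F x (u x)) μ)
    (hFK : ∀ᵐ x ∂μ, LipschitzWith K (F x)) (z : Lp E p μ) {q : Lp E p μ × ℝ} (hq : 0 < q.2) :
    |diffQuot (fun u : Lp E p μ => ∫ x, F x (u x) ∂μ) z q| ≤ ∫ x, K * ‖z x‖ ∂μ := by
  rw [diffQuot_integral hF, ← Real.norm_eq_abs]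
  refine norm_integral_le_of_norm_le (((Lp.memLp z).integrable Fact.out).norm.const_mul K) ?_
  filter_upwards [hFK] with x hx
  exact abs_diffQuot_le hx (z x) (p := (q.1 x, q.2)) hq

theorem clarkeDeriv_integral_add_le {F₁ F₂ : Ω → E → ℝ} {K : ℝ≥0}
    (hF₁ : ∀ u : Lp E p μ, Integrable (fun x => F₁ x (u x)) μ)
    (hF₂ : ∀ u : Lp E p μ, Integrable (fun x => F₂ x (u x)) μ)
    (hF₁K : ∀ᵐ x ∂μ, LipschitzWith K (F₁ x)) (hF₂K : ∀ᵐ x ∂μ, LipschitzWith K (F₂ x))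
    {v₁ v₂ z₁ z₂ : Lp E p μ} {h : Ω → ℝ} (hh : Integrable h μ)
    (hle : ∀ᵐ x ∂μ, clarkeDeriv (F₁ x) (v₁ x) (z₁ x) + clarkeDeriv (F₂ x) (v₂ x) (z₂ x) ≤ h x) :
    clarkeDeriv (fun u : Lp E p μ => ∫ x, F₁ x (u x) ∂μ) v₁ z₁ +
      clarkeDeriv (fun u : Lp E p μ => ∫ x, F₂ x (u x) ∂μ) v₂ z₂ ≤ ∫ x, h x ∂μ := by
  refine le_of_forall_pos_lt_add fun ε hε => ?_
  have hε₃ : 0 < ε / 3 := by positivity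
  obtain ⟨s₁, hs₁, hs₁n⟩ := exists_seq_clarkeDeriv_sub_lt_diffQuot
    ((eventually_snd_pos v₁).mono fun q hq => abs_diffQuot_integral_le hF₁ hF₁K z₁ hq) hε₃
  obtain ⟨s₂, hs₂, hs₂n⟩ := exists_seq_clarkeDeriv_sub_lt_diffQuot
    ((eventually_snd_pos v₂).mono fun q hq => abs_diffQuot_integral_le hF₂ hF₂K z₂ hq) hε₃
  obtain ⟨φ, hφ, hae⟩ := Lp.exists_strictMono_ae_tendsto₂ (μ := μ)
    (tendsto_fst.comp hs₁) (tendsto_fst.comp hs₂)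
  set G : ℕ → Ω → ℝ := fun n x => diffQuot (F₁ x) (z₁ x) ((s₁ (φ n)).1 x, (s₁ (φ n)).2) +
    diffQuot (F₂ x) (z₂ x) ((s₂ (φ n)).1 x, (s₂ (φ n)).2)
  have hG_int : ∀ n, Integrable (G n) μ := fun n =>
    (integrable_diffQuot hF₁ _ z₁ _).add (integrable_diffQuot hF₂ _ z₂ _)
  have hG_eq : ∀ n, ∫ x, G n x ∂μ =
      diffQuot (fun u : Lp E p μ => ∫ x, F₁ x (u x) ∂μ) z₁ (s₁ (φ n)) +
        diffQuot (fun u : Lp E p μ => ∫ x, F₂ x (u x) ∂μ) z₂ (s₂ (φ n)) := fun n => by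
    rw [diffQuot_integral hF₁, diffQuot_integral hF₂,
      integral_add (integrable_diffQuot hF₁ _ z₁ _) (integrable_diffQuot hF₂ _ z₂ _)]
  have hG_bound : ∀ n, ∀ᵐ x ∂μ, |G n x| ≤ K * ‖z₁ x‖ + K * ‖z₂ x‖ := fun n => by
    filter_upwards [hF₁K, hF₂K] with x h₁ h₂
    exact (abs_add_le _ _).trans (add_le_add (abs_diffQuot_le h₁ _ (hs₁n _).1)
      (abs_diffQuot_le h₂ _ (hs₂n _).1))
  have hG_lim : ∀ᵐ x ∂μ, ∀ ε > 0, ∀ᶠ n in atTop, G n x < h x + ε := by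
    filter_upwards [hF₁K, hF₂K, hae, hle] with x h₁ h₂ hx hxle ε hε
    have ht₁ : Tendsto (fun n => ((s₁ (φ n)).1 x, (s₁ (φ n)).2)) atTop (𝓝 (v₁ x) ×ˢ 𝓝[>] 0) :=
      hx.1.prodMk ((tendsto_snd.comp hs₁).comp hφ.tendsto_atTop)
    have ht₂ : Tendsto (fun n => ((s₂ (φ n)).1 x, (s₂ (φ n)).2)) atTop (𝓝 (v₂ x) ×ˢ 𝓝[>] 0) :=
      hx.2.prodMk ((tendsto_snd.comp hs₂).comp hφ.tendsto_atTop)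
    filter_upwards [ht₁.eventually (eventually_diffQuot_lt_clarkeDeriv_add
        (eventually_abs_diffQuot_le h₁ _ (z₁ x)) (half_pos hε)),
      ht₂.eventually (eventually_diffQuot_lt_clarkeDeriv_add
        (eventually_abs_diffQuot_le h₂ _ (z₂ x)) (half_pos hε))] with n hn₁ hn₂
    linarith
  obtain ⟨n, hn⟩ := (eventually_integral_lt_add hG_int hh
    ((((Lp.memLp z₁).integrable Fact.out).norm.const_mul K).add
      (((Lp.memLp z₂).integrable Fact.out).norm.const_mul K)) hG_bound hG_lim hε₃).exists
  linarith [hG_eq n, (hs₁n (φ n)).2, (hs₂n (φ n)).2]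

end IntegralFunctional

section L2

variable {Ω E : Type*} [MeasurableSpace Ω] {μ : Measure Ω} [NormedAddCommGroup E]

theorem MeasureTheory.Lp.integrable_norm_mul_norm (f g : Lp E 2 μ) :
    Integrable (fun x => ‖f x‖ * ‖g x‖) μ :=
  (Lp.memLp f).norm.integrable_mul (Lp.memLp g).norm

theorem MeasureTheory.Lp.integral_norm_mul_norm_le (f g : Lp E 2 μ) :
    ∫ x, ‖f x‖ * ‖g x‖ ∂μ ≤ ‖f‖ * ‖g‖ := by
  have hf := (Lp.memLp f).norm
  have hg := (Lp.memLp g).norm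
  have hinner : ⟪hf.toLp _, hg.toLp _⟫ = ∫ x, ‖f x‖ * ‖g x‖ ∂μ := by
    rw [L2.inner_def]
    refine integral_congr_ae ?_
    filter_upwards [hf.coeFn_toLp, hg.coeFn_toLp] with x hfx hgx
    simp [hfx, hgx, mul_comm]
  have hnorm (u : Lp E 2 μ) (hu : MemLp (fun x => ‖u x‖) 2 μ) : ‖hu.toLp _‖ = ‖u‖ := by
    rw [Lp.norm_toLp, eLpNorm_norm, Lp.norm_def]
  rw [← hinner, ← hnorm f hf, ← hnorm g hg]
  exact real_inner_le_norm _ _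

variable [InnerProductSpace ℝ E]

theorem MeasureTheory.Lp.integral_norm_sq_eq (f : Lp E 2 μ) : ∫ x, ‖f x‖ ^ 2 ∂μ = ‖f‖ ^ 2 := by
  simp only [← real_inner_self_eq_norm_sq, L2.inner_def]

theorem MeasureTheory.Lp.integrable_norm_sq (f : Lp E 2 μ) :
    Integrable (fun x => ‖f x‖ ^ 2) μ := by
  simpa only [real_inner_self_eq_norm_sq] using L2.integrable_inner (𝕜 := ℝ) f f

end L2

section Tangential

variable {E : Type*} [NormedAddCommGroup E] [InnerProductSpace ℝ E] {n : E}

theorem abs_real_inner_le_of_norm_eq_one (hn : ‖n‖ = 1) (ξ : E) : |⟪ξ, n⟫| ≤ ‖ξ‖ := by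
  simpa [hn] using abs_real_inner_le_norm ξ n

theorem abs_sub_comp_inner_le {g : ℝ → ℝ} {L : ℝ} (hg : ∀ r₁ r₂, |g r₁ - g r₂| ≤ L * |r₁ - r₂|)
    (hL : 0 ≤ L) (hn : ‖n‖ = 1) (η₁ η₂ : E) : |g ⟪η₁, n⟫ - g ⟪η₂, n⟫| ≤ L * ‖η₁ - η₂‖ := by
  refine (hg _ _).trans ?_
  rw [← inner_sub_left]
  gcongr
  exact abs_real_inner_le_of_norm_eq_one hn _

noncomputable def tangentialPart (n : E) : E →L[ℝ] E :=
  ContinuousLinearMap.id ℝ E - (innerSL ℝ n).smulRight n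

theorem tangentialPart_apply (n ξ : E) : tangentialPart n ξ = ξ - ⟪ξ, n⟫ • n := by
  simp [tangentialPart, real_inner_comm]

theorem norm_tangentialPart_le (hn : ‖n‖ = 1) (ξ : E) : ‖tangentialPart n ξ‖ ≤ ‖ξ‖ := by
  have hsq : ‖tangentialPart n ξ‖ ^ 2 = ‖ξ‖ ^ 2 - ⟪ξ, n⟫ ^ 2 := by
    rw [tangentialPart_apply, norm_sub_sq_real, norm_smul, real_inner_smul_right, hn,
      Real.norm_eq_abs, mul_one, sq_abs]
    ring
  exact le_of_sq_le_sq (by nlinarith [sq_nonneg ⟪ξ, n⟫]) (norm_nonneg ξ)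

end Tangential

section ContactIntegrand

variable {Ω : Type*} {d : ℕ} {ν : Ω → EuclideanSpace ℝ (Fin d)} {gν gτ : Ω → ℝ → ℝ}
  {jτ : Ω → EuclideanSpace ℝ (Fin d) → ℝ} {x : Ω}

theorem jfun_eq (η : EuclideanSpace ℝ (Fin d)) :
    jfun ν gν gτ jτ x η = fun ξ =>
      (gν x ⟪η, ν x⟫ • innerSL ℝ (ν x)) ξ + gτ x ⟪η, ν x⟫ * jτ x (tangentialPart (ν x) ξ) := by
  ext ξ
  simp [jfun, tangentialPart_apply, real_inner_comm]

variable {gbarν gbarτ cτ : ℝ}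

theorem lipschitzWith_jfun (hν : ‖ν x‖ = 1)
    (hgν : ∀ r, 0 ≤ gν x r ∧ gν x r ≤ gbarν) (hgτ : ∀ r, 0 ≤ gτ x r ∧ gτ x r ≤ gbarτ)
    (hjτ : ∀ ξ₁ ξ₂, |jτ x ξ₁ - jτ x ξ₂| ≤ cτ * ‖ξ₁ - ξ₂‖) (hcτ : 0 ≤ cτ)
    (η : EuclideanSpace ℝ (Fin d)) :
    LipschitzWith (gbarν + gbarτ * cτ).toNNReal (jfun ν gν gτ jτ x η) := by
  refine lipschitzWith_of_abs_sub_le fun ξ₁ ξ₂ => ?_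
  obtain ⟨ha₀, ha⟩ := hgν ⟪η, ν x⟫
  obtain ⟨hb₀, hb⟩ := hgτ ⟪η, ν x⟫
  have htang : |jτ x (tangentialPart (ν x) ξ₁) - jτ x (tangentialPart (ν x) ξ₂)| ≤
      cτ * ‖ξ₁ - ξ₂‖ := by
    refine (hjτ _ _).trans (mul_le_mul_of_nonneg_left ?_ hcτ)
    rw [← map_sub]
    exact norm_tangentialPart_le hν _
  rw [jfun_eq]
  simp only [smul_apply, innerSL_apply_apply, smul_eq_mul]
  calc |gν x ⟪η, ν x⟫ * ⟪ν x, ξ₁⟫ + gτ x ⟪η, ν x⟫ * jτ x (tangentialPart (ν x) ξ₁) -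
        (gν x ⟪η, ν x⟫ * ⟪ν x, ξ₂⟫ + gτ x ⟪η, ν x⟫ * jτ x (tangentialPart (ν x) ξ₂))|
      = |gν x ⟪η, ν x⟫ * ⟪ξ₁ - ξ₂, ν x⟫ + gτ x ⟪η, ν x⟫ *
          (jτ x (tangentialPart (ν x) ξ₁) - jτ x (tangentialPart (ν x) ξ₂))| := by
        rw [inner_sub_left, real_inner_comm ξ₁, real_inner_comm ξ₂]
        congr 1
        ring
    _ ≤ gν x ⟪η, ν x⟫ * ‖ξ₁ - ξ₂‖ + gτ x ⟪η, ν x⟫ * (cτ * ‖ξ₁ - ξ₂‖) := by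
        refine (abs_add_le _ _).trans (add_le_add ?_ ?_) <;>
          rw [abs_mul, abs_of_nonneg (by assumption)]
        · exact mul_le_mul_of_nonneg_left (abs_real_inner_le_of_norm_eq_one hν _) ha₀
        · exact mul_le_mul_of_nonneg_left htang hb₀
    _ ≤ (gbarν + gbarτ * cτ) * ‖ξ₁ - ξ₂‖ := by
        nlinarith [norm_nonneg (ξ₁ - ξ₂), mul_nonneg hcτ (norm_nonneg (ξ₁ - ξ₂))]

theorem abs_jfun_le (hν : ‖ν x‖ = 1)
    (hgν : ∀ r, 0 ≤ gν x r ∧ gν x r ≤ gbarν) (hgτ : ∀ r, 0 ≤ gτ x r ∧ gτ x r ≤ gbarτ)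
    (hjτ : ∀ ξ₁ ξ₂, |jτ x ξ₁ - jτ x ξ₂| ≤ cτ * ‖ξ₁ - ξ₂‖) (hcτ : 0 ≤ cτ)
    (η ξ ζ : EuclideanSpace ℝ (Fin d)) :
    |jfun ν gν gτ jτ x η ξ| ≤ gbarν * ‖ξ‖ + gbarτ * (|jτ x ζ| + cτ * (‖ξ‖ + ‖ζ‖)) := by
  obtain ⟨ha₀, ha⟩ := hgν ⟪η, ν x⟫
  obtain ⟨hb₀, hb⟩ := hgτ ⟪η, ν x⟫
  have htang : |jτ x (tangentialPart (ν x) ξ)| ≤ |jτ x ζ| + cτ * (‖ξ‖ + ‖ζ‖) := by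
    have hlip := (hjτ (tangentialPart (ν x) ξ) ζ).trans (mul_le_mul_of_nonneg_left
      ((norm_sub_le _ _).trans (add_le_add_left (norm_tangentialPart_le hν ξ) _)) hcτ)
    linarith [abs_sub_abs_le_abs_sub (jτ x (tangentialPart (ν x) ξ)) (jτ x ζ)]
  rw [jfun, ← tangentialPart_apply]
  refine (abs_add_le _ _).trans (add_le_add ?_ ?_) <;>
    rw [abs_mul, abs_of_nonneg (by assumption)]
  · exact mul_le_mul ha (abs_real_inner_le_of_norm_eq_one hν _) (abs_nonneg _) (ha₀.trans ha)
  · exact mul_le_mul hb htang (abs_nonneg _) (hb₀.trans hb)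

theorem clarkeDeriv_jfun_le {K : ℝ≥0} (hjτ : LipschitzWith K (jτ x))
    {η : EuclideanSpace ℝ (Fin d)} (hgτ : 0 ≤ gτ x ⟪η, ν x⟫) (ξ ζ : EuclideanSpace ℝ (Fin d)) :
    clarkeDeriv (jfun ν gν gτ jτ x η) ξ ζ ≤ gν x ⟪η, ν x⟫ * ⟪ζ, ν x⟫ +
      gτ x ⟪η, ν x⟫ * clarkeDeriv (jτ x) (tangentialPart (ν x) ξ) (tangentialPart (ν x) ζ) := by
  have h := clarkeDeriv_clm_add_mul_comp_le (gν x ⟪η, ν x⟫ • innerSL ℝ (ν x))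
    (tangentialPart (ν x)) hjτ hgτ ξ ζ
  rwa [← jfun_eq, smul_apply, innerSL_apply_apply, smul_eq_mul, real_inner_comm ζ] at h

theorem clarkeDeriv_jfun_add_le {Lgν Lgτ ατ : ℝ} (hν : ‖ν x‖ = 1)
    (hgνlip : ∀ r₁ r₂, |gν x r₁ - gν x r₂| ≤ Lgν * |r₁ - r₂|)
    (hgτlip : ∀ r₁ r₂, |gτ x r₁ - gτ x r₂| ≤ Lgτ * |r₁ - r₂|)
    (hgτ : ∀ r, 0 ≤ gτ x r ∧ gτ x r ≤ gbarτ)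
    (hjτ : ∀ ξ₁ ξ₂, |jτ x ξ₁ - jτ x ξ₂| ≤ cτ * ‖ξ₁ - ξ₂‖)
    (hLgν : 0 ≤ Lgν) (hLgτ : 0 ≤ Lgτ) (hcτ : 0 ≤ cτ) (hατ : 0 ≤ ατ)
    (hmon : ∀ ξ₁ ξ₂, clarkeDeriv (jτ x) ξ₁ (ξ₂ - ξ₁) + clarkeDeriv (jτ x) ξ₂ (ξ₁ - ξ₂) ≤
      ατ * ‖ξ₁ - ξ₂‖ ^ 2)
    (η₁ η₂ ξ₁ ξ₂ : EuclideanSpace ℝ (Fin d)) :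
    clarkeDeriv (jfun ν gν gτ jτ x η₁) ξ₁ (ξ₂ - ξ₁) +
        clarkeDeriv (jfun ν gν gτ jτ x η₂) ξ₂ (ξ₁ - ξ₂) ≤
      gbarτ * ατ * ‖ξ₁ - ξ₂‖ ^ 2 + (Lgν + Lgτ * cτ) * (‖η₁ - η₂‖ * ‖ξ₁ - ξ₂‖) := by
  set P := tangentialPart (ν x)
  have hjτK := lipschitzWith_of_abs_sub_le hjτ
  have hP : ‖P (ξ₁ - ξ₂)‖ ≤ ‖ξ₁ - ξ₂‖ := norm_tangentialPart_le hν _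
  set d₁ := clarkeDeriv (jτ x) (P ξ₁) (P (ξ₂ - ξ₁))
  set d₂ := clarkeDeriv (jτ x) (P ξ₂) (P (ξ₁ - ξ₂))
  have hd : d₁ + d₂ ≤ ατ * ‖ξ₁ - ξ₂‖ ^ 2 := by
    have h := hmon (P ξ₁) (P ξ₂)
    rw [← map_sub, ← map_sub] at h
    exact h.trans (by gcongr)
  have hd₂ : |d₂| ≤ cτ * ‖ξ₁ - ξ₂‖ := by
    refine (abs_clarkeDeriv_le hjτK _ _).trans ?_
    rw [Real.coe_toNNReal _ hcτ]
    gcongr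
  have ha := abs_sub_comp_inner_le hgνlip hLgν hν η₁ η₂
  have hb := abs_sub_comp_inner_le hgτlip hLgτ hν η₂ η₁
  have hnormal : |⟪ξ₂ - ξ₁, ν x⟫| ≤ ‖ξ₁ - ξ₂‖ :=
    norm_sub_rev ξ₁ ξ₂ ▸ abs_real_inner_le_of_norm_eq_one hν _
  obtain ⟨hb₁, hb₁'⟩ := hgτ ⟪η₁, ν x⟫
  calc clarkeDeriv (jfun ν gν gτ jτ x η₁) ξ₁ (ξ₂ - ξ₁) +
        clarkeDeriv (jfun ν gν gτ jτ x η₂) ξ₂ (ξ₁ - ξ₂)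
      ≤ (gν x ⟪η₁, ν x⟫ * ⟪ξ₂ - ξ₁, ν x⟫ + gτ x ⟪η₁, ν x⟫ * d₁) +
          (gν x ⟪η₂, ν x⟫ * ⟪ξ₁ - ξ₂, ν x⟫ + gτ x ⟪η₂, ν x⟫ * d₂) :=
        add_le_add (clarkeDeriv_jfun_le hjτK hb₁ _ _) (clarkeDeriv_jfun_le hjτK (hgτ _).1 _ _)
    _ = (gν x ⟪η₁, ν x⟫ - gν x ⟪η₂, ν x⟫) * ⟪ξ₂ - ξ₁, ν x⟫ + gτ x ⟪η₁, ν x⟫ * (d₁ + d₂) +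
          (gτ x ⟪η₂, ν x⟫ - gτ x ⟪η₁, ν x⟫) * d₂ := by
        rw [← neg_sub ξ₂ ξ₁, inner_neg_left]
        ring
    _ ≤ Lgν * ‖η₁ - η₂‖ * ‖ξ₁ - ξ₂‖ + gbarτ * (ατ * ‖ξ₁ - ξ₂‖ ^ 2) +
          Lgτ * ‖η₂ - η₁‖ * (cτ * ‖ξ₁ - ξ₂‖) := by
        gcongr ?_ + ?_ + ?_
        · refine (le_abs_self _).trans ?_
          rw [abs_mul]
          exact mul_le_mul ha hnormal (abs_nonneg _) (by positivity)
        · exact (mul_le_mul_of_nonneg_left hd hb₁).trans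
            (mul_le_mul_of_nonneg_right hb₁' (by positivity))
        · refine (le_abs_self _).trans ?_
          rw [abs_mul]
          exact mul_le_mul hb hd₂ (abs_nonneg _) (by positivity)
    _ = gbarτ * ατ * ‖ξ₁ - ξ₂‖ ^ 2 + (Lgν + Lgτ * cτ) * (‖η₁ - η₂‖ * ‖ξ₁ - ξ₂‖) := by
        rw [norm_sub_rev η₂ η₁]
        ring

end ContactIntegrand

theorem aemeasurable_comp_of_ae_continuous {Ω E : Type*} [MeasurableSpace Ω] {μ : Measure Ω}
    [TopologicalSpace E] [TopologicalSpace.MetrizableSpace E] [SecondCountableTopology E]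
    [MeasurableSpace E] [OpensMeasurableSpace E] {g : Ω → E → ℝ}
    (hmeas : ∀ ξ, Measurable fun x => g x ξ) (hcont : ∀ᵐ x ∂μ, Continuous (g x))
    {u : Ω → E} (hu : AEMeasurable u μ) : AEMeasurable (fun x => g x (u x)) μ := by
  classical
  -- `g` modified on a measurable null set so that every section is continuous
  set N := toMeasurable μ {x | ¬Continuous (g x)}
  set g' : Ω → E → ℝ := fun x ξ => if x ∈ N then 0 else g x ξ
  have hg' : Measurable (Function.uncurry fun ξ x => g' x ξ) := by
    refine measurable_uncurry_of_continuous_of_measurable (fun x => ?_) fun ξ =>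
      Measurable.ite (measurableSet_toMeasurable _ _) measurable_const (hmeas ξ)
    by_cases hx : x ∈ N
    · simp only [g', hx, if_true, continuous_const]
    · simpa only [g', hx, if_false] using not_not.1 fun h => hx (subset_toMeasurable μ _ h)
  have hN : ∀ᵐ x ∂μ, x ∉ N :=
    measure_eq_zero_iff_ae_notMem.1 ((measure_toMeasurable _).trans (ae_iff.1 hcont))
  refine ⟨fun x => g' x (hu.mk u x), hg'.comp (hu.measurable_mk.prodMk measurable_id), ?_⟩
  filter_upwards [hu.ae_eq_mk, hN] with x hx hxN
  simp only [g', hxN, if_false, hx]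

section ContactFunctional

variable {Ω : Type*} [MeasurableSpace Ω] {μ : Measure Ω} {d : ℕ}
  {ν : Ω → EuclideanSpace ℝ (Fin d)} {gν gτ : Ω → ℝ → ℝ} {jτ : Ω → EuclideanSpace ℝ (Fin d) → ℝ}

theorem aestronglyMeasurable_jfun (hνmeas : Measurable ν)
    (hgνmeas : ∀ r, Measurable fun x => gν x r) (hgτmeas : ∀ r, Measurable fun x => gτ x r)
    (hjτmeas : ∀ ξ, Measurable fun x => jτ x ξ) (hgνcont : ∀ᵐ x ∂μ, Continuous (gν x))
    (hgτcont : ∀ᵐ x ∂μ, Continuous (gτ x)) (hjτcont : ∀ᵐ x ∂μ, Continuous (jτ x))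
    {w v : Ω → EuclideanSpace ℝ (Fin d)} (hw : AEMeasurable w μ) (hv : AEMeasurable v μ) :
    AEStronglyMeasurable (fun x => jfun ν gν gτ jτ x (w x) (v x)) μ := by
  have hwν := hw.inner (𝕜 := ℝ) hνmeas.aemeasurable
  have hvν := hv.inner (𝕜 := ℝ) hνmeas.aemeasurable
  exact (((aemeasurable_comp_of_ae_continuous hgνmeas hgνcont hwν).mul hvν).add
    ((aemeasurable_comp_of_ae_continuous hgτmeas hgτcont hwν).mul
      (aemeasurable_comp_of_ae_continuous hjτmeas hjτcont
        (hv.sub (hvν.smul hνmeas.aemeasurable))))).aestronglyMeasurable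

theorem integrable_jfun [IsFiniteMeasure μ] {gbarν gbarτ Lgν Lgτ cτ : ℝ} (hνmeas : Measurable ν)
    (hνunit : ∀ᵐ x ∂μ, ‖ν x‖ = 1)
    (hgνmeas : ∀ r, Measurable fun x => gν x r) (hgτmeas : ∀ r, Measurable fun x => gτ x r)
    (hjτmeas : ∀ ξ, Measurable fun x => jτ x ξ)
    (hgνlip : ∀ᵐ x ∂μ, ∀ r₁ r₂ : ℝ, |gν x r₁ - gν x r₂| ≤ Lgν * |r₁ - r₂|)
    (hgτlip : ∀ᵐ x ∂μ, ∀ r₁ r₂ : ℝ, |gτ x r₁ - gτ x r₂| ≤ Lgτ * |r₁ - r₂|)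
    (hgνbd : ∀ᵐ x ∂μ, ∀ r, 0 ≤ gν x r ∧ gν x r ≤ gbarν)
    (hgτbd : ∀ᵐ x ∂μ, ∀ r, 0 ≤ gτ x r ∧ gτ x r ≤ gbarτ)
    (hjτlip : ∀ᵐ x ∂μ, ∀ ξ₁ ξ₂, |jτ x ξ₁ - jτ x ξ₂| ≤ cτ * ‖ξ₁ - ξ₂‖) (hcτ : 0 ≤ cτ)
    {e : Ω → EuclideanSpace ℝ (Fin d)} (he : MemLp e 2 μ)
    (hjτe : Integrable (fun x => jτ x (e x)) μ) (w v : Lp (EuclideanSpace ℝ (Fin d)) 2 μ) :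
    Integrable (fun x => jfun ν gν gτ jτ x (w x) (v x)) μ := by
  have hv : Integrable (fun x => ‖v x‖) μ := ((Lp.memLp v).integrable one_le_two).norm
  have he' : Integrable (fun x => ‖e x‖) μ := (he.integrable one_le_two).norm
  refine Integrable.mono' ((hv.const_mul gbarν).add
      ((hjτe.abs.add ((hv.add he').const_mul cτ)).const_mul gbarτ))
    (aestronglyMeasurable_jfun hνmeas hgνmeas hgτmeas hjτmeas
      (hgνlip.mono fun x hx => (lipschitzWith_of_abs_sub_le (c := Lgν) hx).continuous)
      (hgτlip.mono fun x hx => (lipschitzWith_of_abs_sub_le (c := Lgτ) hx).continuous)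
      (hjτlip.mono fun x hx => (lipschitzWith_of_abs_sub_le hx).continuous)
      (Lp.aestronglyMeasurable w).aemeasurable (Lp.aestronglyMeasurable v).aemeasurable) ?_
  filter_upwards [hνunit, hgνbd, hgτbd, hjτlip] with x hν hgν hgτ hjτ
  exact abs_jfun_le hν hgν hgτ hjτ hcτ (w x) (v x) (e x)

end ContactFunctional

theorem Jfun_relaxed_monotonicity_general
    {Ω : Type*} [MeasurableSpace Ω] (μ : MeasureTheory.Measure Ω)
    [MeasureTheory.IsFiniteMeasure μ]
    {d : ℕ}
    (ν : Ω → EuclideanSpace ℝ (Fin d)) (hνmeas : Measurable ν)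
    (hνunit : ∀ᵐ x ∂μ, ‖ν x‖ = 1)
    (gν gτ : Ω → ℝ → ℝ)
    (hgνmeas : ∀ r : ℝ, Measurable fun x => gν x r)
    (hgτmeas : ∀ r : ℝ, Measurable fun x => gτ x r)
    (gbarν gbarτ : ℝ)
    (hgνbd : ∀ᵐ x ∂μ, ∀ r : ℝ, 0 ≤ gν x r ∧ gν x r ≤ gbarν)
    (hgτbd : ∀ᵐ x ∂μ, ∀ r : ℝ, 0 ≤ gτ x r ∧ gτ x r ≤ gbarτ)
    (Lgν Lgτ : ℝ) (hLgν : 0 < Lgν) (hLgτ : 0 < Lgτ)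
    (hgνlip : ∀ᵐ x ∂μ, ∀ r₁ r₂ : ℝ, |gν x r₁ - gν x r₂| ≤ Lgν * |r₁ - r₂|)
    (hgτlip : ∀ᵐ x ∂μ, ∀ r₁ r₂ : ℝ, |gτ x r₁ - gτ x r₂| ≤ Lgτ * |r₁ - r₂|)
    (jτ : Ω → EuclideanSpace ℝ (Fin d) → ℝ)
    (hjτmeas : ∀ ξ : EuclideanSpace ℝ (Fin d), Measurable fun x => jτ x ξ)
    (cτ : ℝ) (hcτ : 0 < cτ)
    (hjτlip : ∀ᵐ x ∂μ, ∀ ξ₁ ξ₂ : EuclideanSpace ℝ (Fin d),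
      |jτ x ξ₁ - jτ x ξ₂| ≤ cτ * ‖ξ₁ - ξ₂‖)
    (e : Ω → EuclideanSpace ℝ (Fin d)) (he : MeasureTheory.MemLp e 2 μ)
    (hjτe : MeasureTheory.Integrable (fun x => jτ x (e x)) μ)
    (ατ : ℝ) (hατ : 0 ≤ ατ)
    (hjτmon : ∀ᵐ x ∂μ, ∀ ξ₁ ξ₂ : EuclideanSpace ℝ (Fin d),
      clarkeDeriv (jτ x) ξ₁ (ξ₂ - ξ₁) + clarkeDeriv (jτ x) ξ₂ (ξ₁ - ξ₂) ≤
        ατ * ‖ξ₁ - ξ₂‖ ^ 2) :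
    ∀ w₁ w₂ v₁ v₂ : Lp (EuclideanSpace ℝ (Fin d)) 2 μ,
      clarkeDeriv (Jfun μ ν gν gτ jτ w₁) v₁ (v₂ - v₁) +
        clarkeDeriv (Jfun μ ν gν gτ jτ w₂) v₂ (v₁ - v₂) ≤
      gbarτ * ατ * ‖v₁ - v₂‖ ^ 2 + (Lgν + Lgτ * cτ) * ‖w₁ - w₂‖ * ‖v₁ - v₂‖ := by
  intro w₁ w₂ v₁ v₂
  have hint := integrable_jfun hνmeas hνunit hgνmeas hgτmeas hjτmeas hgνlip hgτlip hgνbd hgτbd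
    hjτlip hcτ.le he hjτe
  have hlip (w : Lp (EuclideanSpace ℝ (Fin d)) 2 μ) :
      ∀ᵐ x ∂μ, LipschitzWith (gbarν + gbarτ * cτ).toNNReal (jfun ν gν gτ jτ x (w x)) := by
    filter_upwards [hνunit, hgνbd, hgτbd, hjτlip] with x hν hgν hgτ hjτ
    exact lipschitzWith_jfun hν hgν hgτ hjτ hcτ.le (w x)
  calc clarkeDeriv (Jfun μ ν gν gτ jτ w₁) v₁ (v₂ - v₁) +
        clarkeDeriv (Jfun μ ν gν gτ jτ w₂) v₂ (v₁ - v₂)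
      ≤ ∫ x, (gbarτ * ατ * ‖(v₁ - v₂ : Lp _ 2 μ) x‖ ^ 2 +
          (Lgν + Lgτ * cτ) * (‖(w₁ - w₂ : Lp _ 2 μ) x‖ * ‖(v₁ - v₂ : Lp _ 2 μ) x‖)) ∂μ := by
        refine clarkeDeriv_integral_add_le (hint w₁) (hint w₂) (hlip w₁) (hlip w₂)
          (((Lp.integrable_norm_sq _).const_mul _).add
            ((Lp.integrable_norm_mul_norm _ _).const_mul _)) ?_
        filter_upwards [hνunit, hgνlip, hgτlip, hgτbd, hjτlip, hjτmon, Lp.coeFn_sub v₂ v₁,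
          Lp.coeFn_sub v₁ v₂, Lp.coeFn_sub w₁ w₂] with x hν hgν hgτ hgτx hjτ hmon hv₂₁ hv₁₂ hw
        rw [hv₂₁, hv₁₂, hw]
        exact clarkeDeriv_jfun_add_le hν hgν hgτ hgτx hjτ hLgν.le hLgτ.le hcτ.le hατ hmon
          (w₁ x) (w₂ x) (v₁ x) (v₂ x)
    _ ≤ gbarτ * ατ * ‖v₁ - v₂‖ ^ 2 + (Lgν + Lgτ * cτ) * ‖w₁ - w₂‖ * ‖v₁ - v₂‖ := by
        rw [integral_add ((Lp.integrable_norm_sq _).const_mul _)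
            ((Lp.integrable_norm_mul_norm _ _).const_mul _), integral_const_mul, integral_const_mul,
          Lp.integral_norm_sq_eq, mul_assoc (Lgν + Lgτ * cτ)]
        gcongr
        exact Lp.integral_norm_mul_norm_le _ _

/-- Under the additional relaxed-monotonicity assumption on `j_τ(x,·)`,
the contact functional `J` satisfies H(J)(c) with `m_{J1} = ḡ_τ α_τ` and
`m_{J2} = L_{g_ν} + L_{g_τ} c_τ`. -/
theorem Jfun_relaxed_monotonicity
    {Ω : Type*} [MeasurableSpace Ω] (μ : MeasureTheory.Measure Ω)
    [MeasureTheory.IsFiniteMeasure μ]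
    {d : ℕ} (hd : 1 ≤ d)
    (ν : Ω → EuclideanSpace ℝ (Fin d)) (hνmeas : Measurable ν)
    (hνunit : ∀ᵐ x ∂μ, ‖ν x‖ = 1)
    (gν gτ : Ω → ℝ → ℝ)
    (hgνmeas : ∀ r : ℝ, Measurable fun x => gν x r)
    (hgτmeas : ∀ r : ℝ, Measurable fun x => gτ x r)
    (gbarν gbarτ : ℝ) (hgbarν : 0 < gbarν) (hgbarτ : 0 < gbarτ)
    (hgνbd : ∀ᵐ x ∂μ, ∀ r : ℝ, 0 ≤ gν x r ∧ gν x r ≤ gbarν)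
    (hgτbd : ∀ᵐ x ∂μ, ∀ r : ℝ, 0 ≤ gτ x r ∧ gτ x r ≤ gbarτ)
    (Lgν Lgτ : ℝ) (hLgν : 0 < Lgν) (hLgτ : 0 < Lgτ)
    (hgνlip : ∀ᵐ x ∂μ, ∀ r₁ r₂ : ℝ, |gν x r₁ - gν x r₂| ≤ Lgν * |r₁ - r₂|)
    (hgτlip : ∀ᵐ x ∂μ, ∀ r₁ r₂ : ℝ, |gτ x r₁ - gτ x r₂| ≤ Lgτ * |r₁ - r₂|)
    (jτ : Ω → EuclideanSpace ℝ (Fin d) → ℝ)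
    (hjτmeas : ∀ ξ : EuclideanSpace ℝ (Fin d), Measurable fun x => jτ x ξ)
    (cτ : ℝ) (hcτ : 0 < cτ)
    (hjτlip : ∀ᵐ x ∂μ, ∀ ξ₁ ξ₂ : EuclideanSpace ℝ (Fin d),
      |jτ x ξ₁ - jτ x ξ₂| ≤ cτ * ‖ξ₁ - ξ₂‖)
    (e : Ω → EuclideanSpace ℝ (Fin d)) (he : MeasureTheory.MemLp e 2 μ)
    (hjτe : MeasureTheory.Integrable (fun x => jτ x (e x)) μ)
    (ατ : ℝ) (hατ : 0 ≤ ατ)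
    (hjτmon : ∀ᵐ x ∂μ, ∀ ξ₁ ξ₂ : EuclideanSpace ℝ (Fin d),
      clarkeDeriv (jτ x) ξ₁ (ξ₂ - ξ₁) + clarkeDeriv (jτ x) ξ₂ (ξ₁ - ξ₂) ≤
        ατ * ‖ξ₁ - ξ₂‖ ^ 2) :
    ∀ w₁ w₂ v₁ v₂ : Lp (EuclideanSpace ℝ (Fin d)) 2 μ,
      clarkeDeriv (Jfun μ ν gν gτ jτ w₁) v₁ (v₂ - v₁) +
        clarkeDeriv (Jfun μ ν gν gτ jτ w₂) v₂ (v₁ - v₂) ≤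
      gbarτ * ατ * ‖v₁ - v₂‖ ^ 2 + (Lgν + Lgτ * cτ) * ‖w₁ - w₂‖ * ‖v₁ - v₂‖ :=
  Jfun_relaxed_monotonicity_general μ ν hνmeas hνunit gν gτ hgνmeas hgτmeas gbarν gbarτ hgνbd hgτbd
    Lgν Lgτ hLgν hLgτ hgνlip hgτlip jτ hjτmeas cτ hcτ hjτlip e he hjτe ατ hατ hjτmon
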